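/- Let {λ_k}_{k∈M} and {μ_k}_{k∈M} be real sequences indexed by a set M of consecutive integers, without finite accumulation points, such that the series Σ_{k∈M}(μ_k - λ_k) converges absolutely. Then the infinite product Π_{k∈M} (ζ - μ_k)/(ζ - λ_k) converges uniformly on compact subsets of ℂ \ ℝ, and its limit as ζ → ∞ along any ray with Im ζ ≥ ε > 0 equals 1. -/

import Mathlib

/-!
Off the real axis each factor is `1 + (λₖ - μₖ) / (ζ - λₖ)`, and the perturbation is bounded by
`|μₖ - λₖ| / |Im ζ|`. Wherever `|Im ζ| ≥ δ > 0` (a compact set off `ℝ`, or a half plane) the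
perturbations are dominated by the summable `|μₖ - λₖ| / δ`, so the M-test for products gives
uniform convergence. Since `‖∏ (1 + fₖ) - 1‖ ≤ exp (∑ ‖fₖ‖) - 1` and each perturbation tends to `0`
as `ζ → ∞`, dominated convergence for series gives the limit `1`.
-/

open Filter Topology Bornology

section OneAddProduct

variable {ι α R : Type*} [NormedCommRing R] [NormOneClass R] [CompleteSpace R]

lemma norm_tprod_one_add_sub_one_le {f : ι → R} (hf : Summable fun i ↦ ‖f i‖) :
    ‖∏' i, (1 + f i) - 1‖ ≤ Real.exp (∑' i, ‖f i‖) - 1 := by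
  refine le_of_tendsto ((multipliable_one_add_of_summable hf).hasProd.sub_const 1).norm
    (Eventually.of_forall fun s ↦ ?_)
  calc ‖∏ i ∈ s, (1 + f i) - 1‖ ≤ Real.exp (∑ i ∈ s, ‖f i‖) - 1 :=
        s.norm_prod_one_add_sub_one_le f
    _ ≤ Real.exp (∑' i, ‖f i‖) - 1 := by
        gcongr
        exact hf.sum_le_tsum s fun i _ ↦ norm_nonneg _

lemma tendsto_tprod_one_add_of_dominated {l : Filter α} {f : α → ι → R} {bound : ι → ℝ}
    (h_sum : Summable bound) (h_lim : ∀ i, Tendsto (f · i) l (𝓝 0))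
    (h_bound : ∀ᶠ x in l, ∀ i, ‖f x i‖ ≤ bound i) :
    Tendsto (fun x ↦ ∏' i, (1 + f x i)) l (𝓝 1) := by
  have h_norm_sum : Tendsto (fun x ↦ ∑' i, ‖f x i‖) l (𝓝 0) := by
    simpa using tendsto_tsum_of_dominated_convergence h_sum (fun i ↦ (h_lim i).norm)
      (h_bound.mono fun x hx i ↦ (norm_norm (f x i)).trans_le (hx i))
  have h_exp : Tendsto (fun x ↦ Real.exp (∑' i, ‖f x i‖) - 1) l (𝓝 0) := by
    simpa using ((Real.continuous_exp.tendsto 0).comp h_norm_sum).sub_const 1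
  rw [← tendsto_sub_nhds_zero_iff]
  refine squeeze_zero_norm' (h_bound.mono fun x hx ↦ ?_) h_exp
  exact norm_tprod_one_add_sub_one_le (h_sum.of_nonneg_of_le (fun _ ↦ norm_nonneg _) hx)

end OneAddProduct

section RealPolesAndZeros

lemma sub_ofReal_ne_zero {ζ : ℂ} (hζ : ζ.im ≠ 0) (a : ℝ) : ζ - a ≠ 0 := by
  intro h
  exact hζ (by simpa using congrArg Complex.im h)

lemma sub_div_sub_eq_one_add {ζ : ℂ} (hζ : ζ.im ≠ 0) (a b : ℝ) :
    (ζ - b) / (ζ - a) = 1 + (a - b) / (ζ - a) := by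
  field_simp [sub_ofReal_ne_zero hζ a]
  ring

lemma norm_ofReal_sub_div_le {ζ : ℂ} (hζ : ζ.im ≠ 0) (a b : ℝ) :
    ‖((a : ℂ) - b) / (ζ - a)‖ ≤ |b - a| / |ζ.im| := by
  rw [norm_div, ← Complex.ofReal_sub, Complex.norm_real, Real.norm_eq_abs, abs_sub_comm]
  gcongr
  simpa using Complex.abs_im_le_norm (ζ - a)

lemma tendsto_ofReal_sub_div_cobounded (a b : ℝ) :
    Tendsto (fun ζ : ℂ ↦ ((a : ℂ) - b) / (ζ - a)) (cobounded ℂ) (𝓝 0) := by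
  simpa [div_eq_mul_inv] using
    (tendsto_inv₀_cobounded.comp (tendsto_sub_const_cobounded (a : ℂ))).const_mul ((a : ℂ) - b)

variable {ι : Type*} {lam mu : ι → ℝ}

lemma tendstoUniformlyOn_prod_sub_div_sub (hsum : Summable fun k ↦ |mu k - lam k|)
    {K : Set ℂ} (hK : IsCompact K) (hKim : ∀ ζ ∈ K, ζ.im ≠ 0) :
    TendstoUniformlyOn (fun (s : Finset ι) (ζ : ℂ) ↦ ∏ k ∈ s, (ζ - mu k) / (ζ - lam k))
      (fun ζ ↦ ∏' k, (ζ - mu k) / (ζ - lam k)) atTop K := by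
  obtain ⟨δ, hδ, hδK⟩ := hK.exists_forall_le' (Complex.continuous_im.abs.continuousOn)
    fun ζ hζ ↦ abs_pos.2 (hKim ζ hζ)
  have hbound : ∀ᶠ k in cofinite, ∀ ζ ∈ K,
      ‖((lam k : ℂ) - mu k) / (ζ - lam k)‖ ≤ |mu k - lam k| / δ :=
    Eventually.of_forall fun k ζ hζ ↦
      (norm_ofReal_sub_div_le (hKim ζ hζ) _ _).trans (by gcongr; exact hδK ζ hζ)
  have hcont : ∀ k, ContinuousOn (fun ζ : ℂ ↦ ((lam k : ℂ) - mu k) / (ζ - lam k)) K :=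
    fun k ↦ continuousOn_const.div (continuousOn_id.sub continuousOn_const)
      fun ζ hζ ↦ sub_ofReal_ne_zero (hKim ζ hζ) _
  have hprod := ((hsum.div_const δ).hasProdUniformlyOn_one_add hK hbound hcont).tendstoUniformlyOn
  refine (hprod.congr (Eventually.of_forall fun s ζ hζ ↦ ?_)).congr_right fun ζ hζ ↦ ?_ <;>
    simp only [sub_div_sub_eq_one_add (hKim ζ hζ)]

lemma tendsto_tprod_sub_div_sub_nhds_one (hsum : Summable fun k ↦ |mu k - lam k|)
    {ε : ℝ} (hε : 0 < ε) :
    Tendsto (fun ζ : ℂ ↦ ∏' k, (ζ - mu k) / (ζ - lam k))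
      (comap (‖·‖) atTop ⊓ 𝓟 {ζ : ℂ | ε ≤ ζ.im}) (𝓝 1) := by
  rw [comap_norm_atTop]
  have h_half_plane : ∀ᶠ ζ in cobounded ℂ ⊓ 𝓟 {ζ : ℂ | ε ≤ ζ.im}, ε ≤ ζ.im :=
    mem_inf_of_right (mem_principal_self _)
  have hprod := tendsto_tprod_one_add_of_dominated (hsum.div_const ε)
    (fun k ↦ (tendsto_ofReal_sub_div_cobounded (lam k) (mu k)).mono_left inf_le_left)
    (h_half_plane.mono fun ζ hζ k ↦ (norm_ofReal_sub_div_le (hε.trans_le hζ).ne' _ _).trans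
      (by gcongr; exact hζ.trans (le_abs_self _)))
  refine hprod.congr' (h_half_plane.mono fun ζ hζ ↦ ?_)
  simp only [sub_div_sub_eq_one_add (hε.trans_le hζ).ne']

end RealPolesAndZeros

theorem stmt_3_general (lam mu : ℤ → ℝ)
    (hsum : Summable fun k => |mu k - lam k|) :
    (∀ K : Set ℂ, IsCompact K → (∀ ζ ∈ K, ζ.im ≠ 0) →
      TendstoUniformlyOn
        (fun (s : Finset ℤ) (ζ : ℂ) => ∏ k ∈ s, (ζ - (mu k : ℂ)) / (ζ - (lam k : ℂ)))
        (fun ζ : ℂ => ∏' k : ℤ, (ζ - (mu k : ℂ)) / (ζ - (lam k : ℂ)))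
        atTop K) ∧
    (∀ ε > (0 : ℝ),
      Tendsto (fun ζ : ℂ => ∏' k : ℤ, (ζ - (mu k : ℂ)) / (ζ - (lam k : ℂ)))
        (comap (fun z : ℂ => ‖z‖) atTop ⊓ 𝓟 {ζ : ℂ | ε ≤ ζ.im}) (nhds 1)) :=
  ⟨fun _ hK hKim ↦ tendstoUniformlyOn_prod_sub_div_sub hsum hK hKim,
    fun _ hε ↦ tendsto_tprod_sub_div_sub_nhds_one hsum hε⟩

/-- uniform convergence of the product on compacts of ℂ \ ℝ and
limit 1 at infinity in half planes Im ζ ≥ ε. -/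
theorem stmt_3 (lam mu : ℤ → ℝ)
    (hinj : Function.Injective lam)
    (hacc : ∀ C : ℝ, {k : ℤ | |lam k| ≤ C}.Finite)
    (hsum : Summable fun k => |mu k - lam k|) :
    (∀ K : Set ℂ, IsCompact K → (∀ ζ ∈ K, ζ.im ≠ 0) →
      TendstoUniformlyOn
        (fun (s : Finset ℤ) (ζ : ℂ) => ∏ k ∈ s, (ζ - (mu k : ℂ)) / (ζ - (lam k : ℂ)))
        (fun ζ : ℂ => ∏' k : ℤ, (ζ - (mu k : ℂ)) / (ζ - (lam k : ℂ)))
        atTop K) ∧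
    (∀ ε > (0 : ℝ),
      Tendsto (fun ζ : ℂ => ∏' k : ℤ, (ζ - (mu k : ℂ)) / (ζ - (lam k : ℂ)))
        (comap (fun z : ℂ => ‖z‖) atTop ⊓ 𝓟 {ζ : ℂ | ε ≤ ζ.im}) (nhds 1)) :=
  stmt_3_general lam mu hsum
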